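/- arXiv:2203.14997 — 6 statements merged into one kernel-verified Lean document; each statement's English description precedes it below -/
import Mathlib

section
/- Let S be a GPT state space in ℝ^{d+1} and 𝓔 a GPT effect space for S. The GPT system (S, 𝓔) satisfies intermediate determinism if and only if both: (i) for every pair of distinct actual faces F and F' of the unrestricted effect space E(S), the intersection F ∩ 𝓔 is not a subset of F' ∩ 𝓔; and (ii) every extreme point of S is an exposed point of S. -/
namespace GPT

/-- Euclidean dot product on `Fin n → ℝ`. -/
def dot {n : ℕ} (x y : Fin n → ℝ) : ℝ := ∑ i, x i * y i

/-- The unit effect `u = (0, …, 0, 1)` in `ℝ^{d+1}`. -/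
def unit (d : ℕ) : Fin (d + 1) → ℝ := fun i => if i = Fin.last d then 1 else 0

/-- A GPT state space: a nonempty compact convex subset of `ℝ^{d+1}` whose elements all have
last coordinate equal to `1`. -/
def IsStateSpace (d : ℕ) (S : Set (Fin (d + 1) → ℝ)) : Prop :=
  S.Nonempty ∧ IsCompact S ∧ Convex ℝ S ∧ ∀ ω ∈ S, ω (Fin.last d) = 1

/-- The unrestricted effect space `E(S)` of a state space `S`. -/
def unrestricted (d : ℕ) (S : Set (Fin (d + 1) → ℝ)) : Set (Fin (d + 1) → ℝ) :=
  {e | ∀ ω ∈ S, 0 ≤ dot e ω ∧ dot e ω ≤ 1}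

/-- A GPT effect space for the state space `S`. -/
def IsEffectSpace (d : ℕ) (S E : Set (Fin (d + 1) → ℝ)) : Prop :=
  E ⊆ unrestricted d S ∧ Convex ℝ E ∧ (0 : Fin (d + 1) → ℝ) ∈ E ∧ unit d ∈ E ∧
    (∀ e ∈ E, unit d - e ∈ E) ∧ Submodule.span ℝ E = ⊤

/-- `W(𝓔)`: the set of all mathematically reasonable states for the effect space `𝓔`. -/
def W (d : ℕ) (E : Set (Fin (d + 1) → ℝ)) : Set (Fin (d + 1) → ℝ) :=
  {ω | (∀ e ∈ E, dot ω e ≤ 1) ∧ dot ω (unit d) = 1}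

/-- The actual set `A^X_ω` of `ω` in a set of effects `X`. -/
def actualSet {n : ℕ} (X : Set (Fin n → ℝ)) (ω : Fin n → ℝ) : Set (Fin n → ℝ) :=
  {e ∈ X | dot e ω = 1}

/-- An exposed face of a convex set `C`: a nonempty set of the form
`C ∩ {x : h·x = m}` with `h ≠ 0` and `h·c ≤ m` for all `c ∈ C`. -/
def IsExposedFace {n : ℕ} (C F : Set (Fin n → ℝ)) : Prop :=
  F.Nonempty ∧ ∃ (h : Fin n → ℝ) (m : ℝ), h ≠ 0 ∧ (∀ c ∈ C, dot h c ≤ m) ∧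
    F = {x ∈ C | dot h x = m}

/-- An exposed point of a convex set. -/
def IsExposedPoint {n : ℕ} (C : Set (Fin n → ℝ)) (x : Fin n → ℝ) : Prop :=
  IsExposedFace C {x}

/-- An actual face of an effect space `E`: an exposed face containing the unit effect that is
maximal among exposed faces. -/
def IsActualFace (d : ℕ) (E F : Set (Fin (d + 1) → ℝ)) : Prop :=
  IsExposedFace E F ∧ unit d ∈ F ∧ ∀ F', IsExposedFace E F' → ¬F ⊂ F'

/-- A minimal exposed face of a convex set. -/
def IsMinimalExposedFace {n : ℕ} (C M : Set (Fin n → ℝ)) : Prop :=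
  IsExposedFace C M ∧ ∀ N, IsExposedFace C N → M ∩ N = M ∨ M ∩ N = ∅

/-- Intermediate determinism: every extreme (pure) state of `S` is uniquely identified among
states in `S` by its actual set of effects in `𝓔`. -/
def IntermediateDeterminism (d : ℕ) (S E : Set (Fin (d + 1) → ℝ)) : Prop :=
  ∀ ω ∈ S.extremePoints ℝ, ∀ ω' ∈ S, actualSet E ω' = actualSet E ω → ω' = ω

end GPT

/-!
Exposed faces of `E(S)` through `u` are exactly the actual sets `A(ρ)` of states `ρ ∈ S` (the
normalized exposing functional is a state by the bipolar theorem); the maximal ones are the `A(σ)`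
of extreme states `σ`, and `A(ω)` is maximal whenever `ω` is exposed.

Intermediate determinism fails exactly when an extreme state `ω` admits a state `ψ ≠ ω` with
`A^𝓔(ω) ⊆ A^𝓔(ψ)`: the midpoint of `ω` and `ψ` then has the same actual set as `ω`. This gives (i)
for two distinct actual faces `A(σ)`, `A(ψ)` with `σ` extreme, and (ii) because the states on which
every effect of `A(ω)` is certain form an exposed face of `S`, which must be `{ω}`.

Conversely, under (i) and (ii) every extreme point `σ` of the face of `S` on which `A(ω')` is certain
has `A(σ) = A(ω)`, so `σ = ω` since `ω` is exposed; by Krein–Milman that face, which contains `ω'`,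
is `{ω}`.
-/

namespace GPT

open Matrix

variable {n d : ℕ}

lemma dot_eq_dotProduct (x y : Fin n → ℝ) : dot x y = x ⬝ᵥ y := rfl

lemma dot_comm (x y : Fin n → ℝ) : dot x y = dot y x := dotProduct_comm x y

lemma continuous_dot (v : Fin n → ℝ) : Continuous (dot v) :=
  continuous_const.dotProduct continuous_id

lemma exists_apply_eq_dot (f : StrongDual ℝ (Fin n → ℝ)) : ∃ g, ∀ x, f x = dot g x :=
  ⟨fun i => f (fun j => if i = j then 1 else 0), fun x => by
    rw [← f.coe_coe, LinearMap.pi_apply_eq_sum_univ]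
    simp [dot, mul_comm]⟩

lemma eq_zero_of_forall_dot_eq_zero {A : Set (Fin n → ℝ)} (hA : Submodule.span ℝ A = ⊤)
    {h : Fin n → ℝ} (hh : ∀ e ∈ A, dot h e = 0) : h = 0 := by
  have : dotProductBilin ℝ ℝ h = 0 := LinearMap.ext_on hA hh
  exact dotProduct_self_eq_zero.1 (LinearMap.congr_fun this h)

lemma dot_add_smul_right (e x y : Fin n → ℝ) (a b : ℝ) :
    dot e (a • x + b • y) = a * dot e x + b * dot e y := by
  simp only [dot_eq_dotProduct, dotProduct_add, dotProduct_smul, smul_eq_mul]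

lemma dot_midpoint_eq_one_iff {e x y : Fin n → ℝ} (hx : dot e x ≤ 1) (hy : dot e y ≤ 1) :
    dot e (midpoint ℝ x y) = 1 ↔ dot e x = 1 ∧ dot e y = 1 := by
  rw [midpoint_eq_smul_add, dot_eq_dotProduct, dotProduct_smul, dotProduct_add]
  simp only [← dot_eq_dotProduct, smul_eq_mul, invOf_eq_inv]
  constructor
  · intro h; constructor <;> linarith
  · rintro ⟨h₁, h₂⟩; rw [h₁, h₂]; norm_num

lemma dot_unit_left (x : Fin (d + 1) → ℝ) : dot (unit d) x = x (Fin.last d) := by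
  simp [dot, unit]

lemma dot_unit_right (x : Fin (d + 1) → ℝ) : dot x (unit d) = x (Fin.last d) := by
  simp [dot, unit]

lemma subset_singleton_of_extremePoints_subset {E : Type*} [AddCommGroup E] [Module ℝ E]
    [TopologicalSpace E] [T2Space E] [IsTopologicalAddGroup E] [ContinuousSMul ℝ E]
    [LocallyConvexSpace ℝ E] {K : Set E} {x : E} (hK : IsCompact K) (hconv : Convex ℝ K)
    (h : K.extremePoints ℝ ⊆ {x}) : K ⊆ {x} := by
  rw [← closure_convexHull_extremePoints hK hconv]
  calc closure (convexHull ℝ (K.extremePoints ℝ)) ⊆ closure (convexHull ℝ {x}) :=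
        closure_mono (convexHull_mono h)
    _ = {x} := by rw [convexHull_singleton, closure_singleton]

lemma IsExposedPoint.mem {C : Set (Fin n → ℝ)} {x : Fin n → ℝ} (hx : IsExposedPoint C x) :
    x ∈ C := by
  obtain ⟨-, _, _, -, -, hface⟩ := hx
  exact ((Set.ext_iff.1 hface x).1 rfl).1

def dualFace (S A : Set (Fin n → ℝ)) : Set (Fin n → ℝ) := {σ ∈ S | ∀ e ∈ A, dot e σ = 1}

section DualFace

variable {S A : Set (Fin n → ℝ)}

lemma isExtreme_dualFace (hA : ∀ e ∈ A, ∀ σ ∈ S, dot e σ ≤ 1) :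
    IsExtreme ℝ S (dualFace S A) := by
  refine ⟨fun σ hσ => hσ.1, ?_⟩
  rintro x hx y hy z ⟨-, hz⟩ ⟨a, b, ha, hb, hab, rfl⟩
  have hxy : ∀ e ∈ A, dot e x = 1 ∧ dot e y = 1 := by
    intro e he
    have h := hz e he
    rw [dot_add_smul_right] at h
    have hx₁ := hA e he x hx
    have hy₁ := hA e he y hy
    constructor <;> nlinarith
  exact ⟨hx, fun e he => (hxy e he).1⟩

lemma isCompact_dualFace (hS : IsCompact S) (A : Set (Fin n → ℝ)) :
    IsCompact (dualFace S A) := by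
  have : dualFace S A = S ∩ ⋂ e ∈ A, {σ | dot e σ = 1} := by ext; simp [dualFace]
  rw [this]
  exact hS.inter_right (isClosed_biInter fun e _ => isClosed_eq (continuous_dot e) continuous_const)

lemma convex_dualFace (hS : Convex ℝ S) (A : Set (Fin n → ℝ)) : Convex ℝ (dualFace S A) := by
  rintro x ⟨hxS, hx⟩ y ⟨hyS, hy⟩ a b ha hb hab
  refine ⟨hS hxS hyS ha hb hab, fun e he => ?_⟩
  rw [dot_add_smul_right, hx e he, hy e he, mul_one, mul_one, hab]

/-- `e ↦ (σ - ω) ⬝ᵥ e` is linear, so it vanishes on `A` once it vanishes on a finite subset of `A`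
spanning `span A`. -/
lemma exists_finset_dualFace_eq {ω : Fin n → ℝ} (hω : ∀ e ∈ A, dot e ω = 1) :
    ∃ C : Finset (Fin n → ℝ), ↑C ⊆ A ∧ dualFace S C = dualFace S A := by
  obtain ⟨C, hCA, hspan⟩ :=
    (Submodule.fg_span_iff_fg_span_finset_subset A).1 (IsNoetherian.noetherian (R := ℝ) _)
  refine ⟨C, hCA, subset_antisymm (fun σ ⟨hσS, hσ⟩ => ⟨hσS, fun e he => ?_⟩)
    fun σ ⟨hσS, hσ⟩ => ⟨hσS, fun e he => hσ e (hCA he)⟩⟩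
  have hker : Submodule.span ℝ A ≤ LinearMap.ker (dotProductBilin ℝ ℝ (σ - ω)) := by
    rw [hspan, Submodule.span_le]
    intro f hf
    simp [← dot_eq_dotProduct, dot_comm _ f, hσ f hf, hω f (hCA hf)]
  have := hker (Submodule.subset_span he)
  simp only [LinearMap.mem_ker, dotProductBilin_apply_apply, sub_dotProduct,
    ← dot_eq_dotProduct, dot_comm _ e, hω e he, sub_eq_zero] at this
  exact this

end DualFace

section StateSpace

variable {S : Set (Fin (d + 1) → ℝ)}

lemma dot_unit_of_mem (hS : IsStateSpace d S) {σ : Fin (d + 1) → ℝ} (hσ : σ ∈ S) :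
    dot (unit d) σ = 1 := by
  rw [dot_unit_left, hS.2.2.2 σ hσ]

lemma zero_mem_unrestricted : (0 : Fin (d + 1) → ℝ) ∈ unrestricted d S := fun σ _ => by
  simp [dot_eq_dotProduct]

lemma unit_mem_unrestricted (hS : IsStateSpace d S) : unit d ∈ unrestricted d S :=
  fun σ hσ => by simp [dot_unit_of_mem hS hσ]

lemma unit_sub_mem_unrestricted (hS : IsStateSpace d S) {e : Fin (d + 1) → ℝ}
    (he : e ∈ unrestricted d S) : unit d - e ∈ unrestricted d S := by
  intro σ hσ
  have h := he σ hσ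
  rw [dot_eq_dotProduct, sub_dotProduct, ← dot_eq_dotProduct, ← dot_eq_dotProduct,
    dot_unit_of_mem hS hσ]
  constructor <;> linarith [h.1, h.2]

lemma IsEffectSpace.span_unrestricted {𝓔 : Set (Fin (d + 1) → ℝ)} (h𝓔 : IsEffectSpace d S 𝓔) :
    Submodule.span ℝ (unrestricted d S) = ⊤ :=
  top_unique (h𝓔.2.2.2.2.2 ▸ Submodule.span_mono h𝓔.1)

/-- The effect is `(s + t)⁻¹ • (g + t • u)` for `t` large enough to make it nonnegative on `S`. -/
lemma exists_unrestricted_of_forall_dot_le (hS : IsStateSpace d S) (g : Fin (d + 1) → ℝ) (s : ℝ)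
    (hgs : ∀ σ ∈ S, dot g σ ≤ s) :
    ∃ e ∈ unrestricted d S, ∃ c > 0, ∀ x : Fin (d + 1) → ℝ, x (Fin.last d) = 1 →
      dot e x - 1 = c * (dot g x - s) := by
  obtain ⟨σ₀, -, hmin⟩ := hS.2.1.exists_isMinOn hS.1 (continuous_dot g).continuousOn
  set t := max (-dot g σ₀) (-s) + 1
  have hst : 0 < s + t := by linarith [le_max_right (-dot g σ₀) (-s)]
  have hdot : ∀ x : Fin (d + 1) → ℝ, x (Fin.last d) = 1 →
      dot ((s + t)⁻¹ • (g + t • unit d)) x = (s + t)⁻¹ * (dot g x + t) := by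
    intro x hx
    rw [dot_eq_dotProduct, smul_dotProduct, add_dotProduct, smul_dotProduct,
      ← dot_eq_dotProduct, ← dot_eq_dotProduct, dot_unit_left, hx, smul_eq_mul, smul_eq_mul,
      mul_one]
  refine ⟨(s + t)⁻¹ • (g + t • unit d), fun σ hσ => ?_, (s + t)⁻¹, inv_pos.2 hst, fun x hx => ?_⟩
  · rw [hdot σ (hS.2.2.2 σ hσ)]
    have hlow : 0 ≤ dot g σ + t := by
      linarith [isMinOn_iff.1 hmin σ hσ, le_max_left (-dot g σ₀) (-s)]
    refine ⟨by positivity, ?_⟩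
    calc (s + t)⁻¹ * (dot g σ + t) ≤ (s + t)⁻¹ * (s + t) := by
          gcongr
          exact hgs σ hσ
      _ = 1 := inv_mul_cancel₀ hst.ne'
  · rw [hdot x hx]
    field_simp
    ring

lemma mem_of_forall_unrestricted_dot_le_one (hS : IsStateSpace d S) {ρ : Fin (d + 1) → ℝ}
    (hρ : ρ (Fin.last d) = 1) (hle : ∀ e ∈ unrestricted d S, dot e ρ ≤ 1) : ρ ∈ S := by
  by_contra hρS
  obtain ⟨f, s, hfS, hfρ⟩ := geometric_hahn_banach_closed_point hS.2.2.1 hS.2.1.isClosed hρS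
  obtain ⟨g, hg⟩ := exists_apply_eq_dot f
  obtain ⟨e, he, c, hc, hec⟩ :=
    exists_unrestricted_of_forall_dot_le hS g s fun σ hσ => (hg σ ▸ hfS σ hσ).le
  have hpos : 0 < c * (dot g ρ - s) := mul_pos hc (by linarith [hg ρ])
  linarith [hec ρ hρ, hle e he]

lemma IsExposedPoint.exists_unrestricted (hS : IsStateSpace d S) {ω : Fin (d + 1) → ℝ}
    (hω : IsExposedPoint S ω) :
    ∃ e ∈ unrestricted d S, dot e ω = 1 ∧ ∀ σ ∈ S, dot e σ = 1 → σ = ω := by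
  obtain ⟨-, h, m, -, hle, hface⟩ := hω
  obtain ⟨e, he, c, hc, hec⟩ := exists_unrestricted_of_forall_dot_le hS h m hle
  have hiff : ∀ σ ∈ S, dot e σ = 1 ↔ dot h σ = m := fun σ hσ => by
    rw [← sub_eq_zero, hec σ (hS.2.2.2 σ hσ), mul_eq_zero, sub_eq_zero, or_iff_right hc.ne']
  have hmem : ∀ σ, σ ∈ S ∧ dot h σ = m ↔ σ = ω := fun σ => (Set.ext_iff.1 hface σ).symm
  obtain ⟨hωS, hωm⟩ := (hmem ω).2 rfl
  exact ⟨e, he, (hiff ω hωS).2 hωm, fun σ hσ h1 => (hmem σ).1 ⟨hσ, (hiff σ hσ).1 h1⟩⟩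

lemma isExposedFace_actualSet (hS : IsStateSpace d S) {ω : Fin (d + 1) → ℝ} (hω : ω ∈ S) :
    IsExposedFace (unrestricted d S) (actualSet (unrestricted d S) ω) := by
  refine ⟨⟨unit d, unit_mem_unrestricted hS, dot_unit_of_mem hS hω⟩, ω, 1, ?_,
    fun e he => dot_comm ω e ▸ (he ω hω).2, by ext e; simp [actualSet, dot_comm ω e]⟩
  rintro rfl
  simpa using hS.2.2.2 0 hω

lemma IsExposedFace.exists_eq_actualSet (hS : IsStateSpace d S)
    (hspan : Submodule.span ℝ (unrestricted d S) = ⊤) {F : Set (Fin (d + 1) → ℝ)}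
    (hF : IsExposedFace (unrestricted d S) F) (huF : unit d ∈ F) :
    ∃ ρ ∈ S, F = actualSet (unrestricted d S) ρ := by
  obtain ⟨-, h, m, hh, hle, rfl⟩ := hF
  have hhu : dot h (unit d) = m := huF.2
  have hm : 0 < m := by
    refine (by simpa [dot_eq_dotProduct] using hle 0 zero_mem_unrestricted : 0 ≤ m).lt_of_ne ?_
    rintro rfl
    refine hh (eq_zero_of_forall_dot_eq_zero hspan fun e he => (hle e he).antisymm ?_)
    have := hle _ (unit_sub_mem_unrestricted hS he)
    rw [dot_eq_dotProduct, dotProduct_sub, ← dot_eq_dotProduct, ← dot_eq_dotProduct, hhu] at this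
    linarith
  have hdot : ∀ e, dot e (m⁻¹ • h) = m⁻¹ * dot h e := fun e => by
    rw [dot_comm, dot_eq_dotProduct, smul_dotProduct, smul_eq_mul, dot_eq_dotProduct]
  have hlast : (m⁻¹ • h) (Fin.last d) = 1 := by
    rw [Pi.smul_apply, ← dot_unit_right h, hhu, smul_eq_mul, inv_mul_cancel₀ hm.ne']
  refine ⟨m⁻¹ • h, mem_of_forall_unrestricted_dot_le_one hS hlast fun e he => ?_, ?_⟩
  · rw [hdot, ← inv_mul_cancel₀ hm.ne']
    exact mul_le_mul_of_nonneg_left (hle e he) (inv_nonneg.2 hm.le)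
  · ext e
    simp only [actualSet, hdot, inv_mul_eq_one₀ hm.ne', eq_comm (a := m)]

lemma IsExposedPoint.isActualFace_actualSet (hS : IsStateSpace d S)
    (hspan : Submodule.span ℝ (unrestricted d S) = ⊤) {ω : Fin (d + 1) → ℝ}
    (hω : IsExposedPoint S ω) :
    IsActualFace d (unrestricted d S) (actualSet (unrestricted d S) ω) := by
  obtain ⟨e₀, he₀, he₀ω, huniq⟩ := hω.exists_unrestricted hS
  have hu : unit d ∈ actualSet (unrestricted d S) ω :=
    ⟨unit_mem_unrestricted hS, dot_unit_of_mem hS hω.mem⟩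
  refine ⟨isExposedFace_actualSet hS hω.mem, hu, fun F hF hlt => ?_⟩
  obtain ⟨ρ, hρ, rfl⟩ := hF.exists_eq_actualSet hS hspan (hlt.1 hu)
  obtain rfl : ρ = ω := huniq ρ hρ (hlt.1 ⟨he₀, he₀ω⟩).2
  exact hlt.ne rfl

lemma IsActualFace.exists_extremePoint_eq_actualSet (hS : IsStateSpace d S)
    (hspan : Submodule.span ℝ (unrestricted d S) = ⊤) {F : Set (Fin (d + 1) → ℝ)}
    (hF : IsActualFace d (unrestricted d S) F) :
    ∃ σ ∈ S.extremePoints ℝ, F = actualSet (unrestricted d S) σ := by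
  obtain ⟨ρ, hρ, rfl⟩ := hF.1.exists_eq_actualSet hS hspan hF.2.1
  set A := actualSet (unrestricted d S) ρ
  obtain ⟨σ, hσ⟩ := (isCompact_dualFace hS.2.1 A).extremePoints_nonempty ⟨ρ, hρ, fun e he => he.2⟩
  have hσS := (isExtreme_dualFace (A := A)
    fun e he σ hσ => (he.1 σ hσ).2).extremePoints_subset_extremePoints hσ
  have hsub : A ⊆ actualSet (unrestricted d S) σ :=
    fun e he => ⟨he.1, hσ.1.2 e he⟩
  refine ⟨σ, hσS, by_contra fun hne => hF.2.2 _ (isExposedFace_actualSet hS hσS.1) ?_⟩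
  exact ssubset_of_subset_of_ne hsub hne

/-- Exposed by `u` plus the sum of finitely many effects of `A` that cut out the same face. -/
lemma isExposedFace_dualFace (hS : IsStateSpace d S) {A : Set (Fin (d + 1) → ℝ)}
    (hA : ∀ e ∈ A, ∀ σ ∈ S, dot e σ ≤ 1) (hne : (dualFace S A).Nonempty) :
    IsExposedFace S (dualFace S A) := by
  obtain ⟨ω, hω⟩ := hne
  obtain ⟨C, hCA, hC⟩ := exists_finset_dualFace_eq (S := S) hω.2
  have hdot : ∀ σ ∈ S, dot (unit d + ∑ e ∈ C, e) σ = 1 + ∑ e ∈ C, dot e σ := fun σ hσ => by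
    rw [dot_eq_dotProduct, add_dotProduct, sum_dotProduct, ← dot_eq_dotProduct,
      dot_unit_of_mem hS hσ]
    rfl
  have hiff : ∀ σ ∈ S, dot (unit d + ∑ e ∈ C, e) σ = 1 + C.card ↔ ∀ e ∈ C, dot e σ = 1 :=
    fun σ hσ => by
      rw [hdot σ hσ, add_right_inj]
      simpa using Finset.sum_eq_sum_iff_of_le (s := C) (g := fun _ => (1 : ℝ))
        fun e he => hA e (hCA he) σ hσ
  have hωval : dot (unit d + ∑ e ∈ C, e) ω = 1 + C.card :=
    (hiff ω hω.1).2 fun e he => hω.2 e (hCA he)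
  refine ⟨⟨ω, hω⟩, unit d + ∑ e ∈ C, e, 1 + C.card, fun h0 => ?_, fun σ hσ => ?_, ?_⟩
  · rw [h0, dot_eq_dotProduct, zero_dotProduct] at hωval
    linarith [C.card.cast_nonneg (α := ℝ)]
  · rw [hdot σ hσ]
    have := Finset.sum_le_card_nsmul C (fun e => dot e σ) 1 fun e he => hA e (hCA he) σ hσ
    simp only [nsmul_eq_mul, mul_one] at this
    linarith
  · rw [← hC]
    ext σ
    exact ⟨fun h => ⟨h.1, (hiff σ h.1).2 h.2⟩, fun h => ⟨h.1, (hiff σ h.1).1 h.2⟩⟩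

end StateSpace

section IntermediateDeterminism

variable {S 𝓔 : Set (Fin (d + 1) → ℝ)}

lemma IntermediateDeterminism.eq_of_actualSet_subset (hID : IntermediateDeterminism d S 𝓔)
    (hS : Convex ℝ S) (h𝓔 : 𝓔 ⊆ unrestricted d S) {ω ψ : Fin (d + 1) → ℝ}
    (hω : ω ∈ S.extremePoints ℝ) (hψ : ψ ∈ S) (hsub : actualSet 𝓔 ω ⊆ actualSet 𝓔 ψ) :
    ψ = ω := by
  refine ((midpoint_eq_left_iff ℝ).1 (hID ω hω _ (hS.midpoint_mem hω.1 hψ) ?_)).symm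
  ext e
  refine ⟨fun ⟨he, h⟩ => ⟨he, ?_⟩, fun ⟨he, h⟩ => ⟨he, ?_⟩⟩
  · exact ((dot_midpoint_eq_one_iff (h𝓔 he ω hω.1).2 (h𝓔 he ψ hψ).2).1 h).1
  · exact (dot_midpoint_eq_one_iff (h𝓔 he ω hω.1).2 (h𝓔 he ψ hψ).2).2 ⟨h, (hsub ⟨he, h⟩).2⟩

lemma IntermediateDeterminism.not_inter_subset (hID : IntermediateDeterminism d S 𝓔)
    (hS : IsStateSpace d S) (h𝓔 : IsEffectSpace d S 𝓔) {F F' : Set (Fin (d + 1) → ℝ)}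
    (hF : IsActualFace d (unrestricted d S) F) (hF' : IsActualFace d (unrestricted d S) F')
    (hne : F ≠ F') : ¬F ∩ 𝓔 ⊆ F' ∩ 𝓔 := by
  intro hsub
  obtain ⟨σ, hσ, rfl⟩ := hF.exists_extremePoint_eq_actualSet hS h𝓔.span_unrestricted
  obtain ⟨ρ, hρ, rfl⟩ := hF'.1.exists_eq_actualSet hS h𝓔.span_unrestricted hF'.2.1
  obtain rfl : ρ = σ := hID.eq_of_actualSet_subset hS.2.2.1 h𝓔.1 hσ hρ
    fun e he => ⟨he.1, (hsub ⟨⟨h𝓔.1 he.1, he.2⟩, he.1⟩).1.2⟩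
  exact hne rfl

lemma IntermediateDeterminism.isExposedPoint (hID : IntermediateDeterminism d S 𝓔)
    (hS : IsStateSpace d S) (h𝓔 : 𝓔 ⊆ unrestricted d S) {ω : Fin (d + 1) → ℝ}
    (hω : ω ∈ S.extremePoints ℝ) : IsExposedPoint S ω := by
  have hface : dualFace S (actualSet (unrestricted d S) ω) = {ω} :=
    Set.eq_singleton_iff_unique_mem.2 ⟨⟨hω.1, fun e he => he.2⟩, fun ψ hψ =>
      hID.eq_of_actualSet_subset hS.2.2.1 h𝓔 hω hψ.1 fun e he => ⟨he.1, hψ.2 e ⟨h𝓔 he.1, he.2⟩⟩⟩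
  rw [IsExposedPoint, ← hface]
  exact isExposedFace_dualFace hS (fun e he σ hσ => (he.1 σ hσ).2)
    (hface ▸ Set.singleton_nonempty ω)

lemma intermediateDeterminism_of_isExposedPoint (hS : IsStateSpace d S)
    (h𝓔 : IsEffectSpace d S 𝓔)
    (hi : ∀ F F' : Set (Fin (d + 1) → ℝ), IsActualFace d (unrestricted d S) F →
      IsActualFace d (unrestricted d S) F' → F ≠ F' → ¬F ∩ 𝓔 ⊆ F' ∩ 𝓔)
    (hii : ∀ ω ∈ S.extremePoints ℝ, IsExposedPoint S ω) : IntermediateDeterminism d S 𝓔 := by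
  intro ω hω ω' hω' hact
  have hactual := fun σ hσ => (hii σ hσ).isActualFace_actualSet hS h𝓔.span_unrestricted
  obtain ⟨e₀, he₀, he₀ω, huniq⟩ := (hii ω hω).exists_unrestricted hS
  set A' := actualSet (unrestricted d S) ω'
  suffices dualFace S A' ⊆ {ω} from this ⟨hω', fun e he => he.2⟩
  refine subset_singleton_of_extremePoints_subset (isCompact_dualFace hS.2.1 A')
    (convex_dualFace hS.2.2.1 A') fun σ hσ => ?_
  have hσS := (isExtreme_dualFace (A := A')
    fun e he σ hσ => (he.1 σ hσ).2).extremePoints_subset_extremePoints hσ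
  have hsub : actualSet (unrestricted d S) ω ∩ 𝓔 ⊆ actualSet (unrestricted d S) σ ∩ 𝓔 :=
    fun e ⟨he, he𝓔⟩ => ⟨⟨he.1, hσ.1.2 e ⟨he.1, (hact ▸ ⟨he𝓔, he.2⟩ : e ∈ actualSet 𝓔 ω').2⟩⟩, he𝓔⟩
  have heq : actualSet (unrestricted d S) ω = actualSet (unrestricted d S) σ :=
    by_contra fun hne => hi _ _ (hactual ω hω) (hactual σ hσS) hne hsub
  exact huniq σ hσS.1 (heq ▸ ⟨he₀, he₀ω⟩ : e₀ ∈ actualSet (unrestricted d S) σ).2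

end IntermediateDeterminism

end GPT

open GPT in
theorem stmt_0_general (d : ℕ) (S 𝓔 : Set (Fin (d + 1) → ℝ))
    (hS : IsStateSpace d S) (h𝓔 : IsEffectSpace d S 𝓔) :
    IntermediateDeterminism d S 𝓔 ↔
      ((∀ F F' : Set (Fin (d + 1) → ℝ), IsActualFace d (unrestricted d S) F →
          IsActualFace d (unrestricted d S) F' → F ≠ F' → ¬(F ∩ 𝓔 ⊆ F' ∩ 𝓔)) ∧
        ∀ ω ∈ S.extremePoints ℝ, IsExposedPoint S ω) :=
  ⟨fun hID => ⟨fun _ _ hF hF' hne => hID.not_inter_subset hS h𝓔 hF hF' hne,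
      fun _ hω => hID.isExposedPoint hS h𝓔.1 hω⟩,
    fun ⟨hi, hii⟩ => intermediateDeterminism_of_isExposedPoint hS h𝓔 hi hii⟩

open GPT in
/-- A GPT system `(S, 𝓔)` satisfies intermediate determinism iff (i) for every
pair of distinct actual faces `F`, `F'` of `E(S)`, `F ∩ 𝓔 ⊄ F' ∩ 𝓔`, and (ii) every extreme
point of `S` is an exposed point of `S`. -/
theorem stmt_0 (d : ℕ) (hd : 1 ≤ d) (S 𝓔 : Set (Fin (d + 1) → ℝ))
    (hS : IsStateSpace d S) (h𝓔 : IsEffectSpace d S 𝓔) :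
    IntermediateDeterminism d S 𝓔 ↔
      ((∀ F F' : Set (Fin (d + 1) → ℝ), IsActualFace d (unrestricted d S) F →
          IsActualFace d (unrestricted d S) F' → F ≠ F' → ¬(F ∩ 𝓔 ⊆ F' ∩ 𝓔)) ∧
        ∀ ω ∈ S.extremePoints ℝ, IsExposedPoint S ω) :=
  stmt_0_general d S 𝓔 hS h𝓔
end

section
/- Let S be a GPT state space in ℝ^{d+1} and 𝓔 a GPT effect space for S. For every exposed face F of 𝓔 containing the unit effect u there exists a vector ω ∈ W(𝓔) such that F = {e ∈ 𝓔 : e·ω = 1}. -/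
open GPT in
lemma dot_comm' {n : ℕ} (x y : Fin n → ℝ) : dot x y = dot y x := by
  unfold dot; simp [mul_comm]

open GPT in
lemma dot_smul_left' {n : ℕ} (c : ℝ) (x y : Fin n → ℝ) :
    dot (c • x) y = c * dot x y := by
  unfold dot
  simp [Finset.mul_sum, mul_assoc]

open GPT in
lemma dot_sub_right' {n : ℕ} (x y z : Fin n → ℝ) :
    dot x (y - z) = dot x y - dot x z := by
  unfold dot
  simp [mul_sub, Finset.sum_sub_distrib]

open GPT in
/-- For every exposed face `F` of a GPT effect space `𝓔` containing the unit
effect there exists `ω ∈ W(𝓔)` with `F = {e ∈ 𝓔 : e·ω = 1}`. -/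
theorem stmt_3 (d : ℕ) (hd : 1 ≤ d) (S 𝓔 : Set (Fin (d + 1) → ℝ))
    (hS : IsStateSpace d S) (h𝓔 : IsEffectSpace d S 𝓔)
    (F : Set (Fin (d + 1) → ℝ)) (hF : IsExposedFace 𝓔 F) (huF : unit d ∈ F) :
    ∃ ω ∈ W d 𝓔, F = {e ∈ 𝓔 | dot e ω = 1} := by
  obtain ⟨hFne, h, m, hh0, hle, hFeq⟩ := hF
  obtain ⟨hsub, hconv, h0, hu, hcompl, hspan⟩ := h𝓔
  have hum : dot h (unit d) = m := by
    rw [hFeq] at huF; exact huF.2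
  have hm0 : 0 ≤ m := by
    have := hle 0 h0
    simpa [dot] using this
  rcases eq_or_lt_of_le hm0 with hm | hm
  · exfalso
    have hzero : ∀ e ∈ 𝓔, dot h e = 0 := by
      intro e he
      have h1 := hle e he
      have h2 := hle (unit d - e) (hcompl e he)
      rw [dot_sub_right', hum] at h2
      rw [← hm] at h1
      linarith
    apply hh0
    have key : ∀ x ∈ Submodule.span ℝ 𝓔, dot h x = 0 := by
      intro x hx
      induction hx using Submodule.span_induction with
      | mem y hy => exact hzero y hy
      | zero => simp [dot]
      | add y z _ _ hy hz => simp [dot, mul_add, Finset.sum_add_distrib] at hy hz ⊢; simp [hy, hz]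
      | smul c y _ hy =>
          have : dot h (c • y) = c * dot h y := by
            rw [dot_comm', dot_smul_left', dot_comm']
          rw [this, hy, mul_zero]
    have hhh : dot h h = 0 := key h (by rw [hspan]; trivial)
    funext i
    have hnn : ∀ i ∈ Finset.univ, (0:ℝ) ≤ h i * h i := fun i _ => mul_self_nonneg _
    have := (Finset.sum_eq_zero_iff_of_nonneg hnn).mp hhh i (Finset.mem_univ i)
    have := mul_self_eq_zero.mp this
    simpa using this
  · refine ⟨m⁻¹ • h, ⟨?_, ?_⟩, ?_⟩
    · intro e he
      rw [dot_smul_left']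
      have := hle e he
      rw [inv_mul_le_iff₀ hm]
      linarith
    · rw [dot_smul_left', hum, inv_mul_cancel₀ (ne_of_gt hm)]
    · rw [hFeq]
      ext e
      simp only [Set.mem_setOf_eq]
      constructor
      · rintro ⟨he, hme⟩
        refine ⟨he, ?_⟩
        rw [dot_comm' e, dot_smul_left', hme, inv_mul_cancel₀ (ne_of_gt hm)]
      · rintro ⟨he, hme⟩
        refine ⟨he, ?_⟩
        rw [dot_comm' e, dot_smul_left', dot_comm'] at hme
        field_simp at hme
        rw [dot_comm']
        exact hme
end

section
/- Let C be a nonempty compact convex subset of ℝ^n. If every extreme point of C is an exposed point of C, then every minimal exposed face of C is a singleton. -/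
open GPT in
lemma dot_comb {n : ℕ} (h x y : Fin n → ℝ) (a b : ℝ) :
    dot h (a • x + b • y) = a * dot h x + b * dot h y := by
  simp only [dot, Finset.mul_sum]
  rw [← Finset.sum_add_distrib]
  apply Finset.sum_congr rfl
  intro i _
  simp [Pi.add_apply, Pi.smul_apply, smul_eq_mul]
  ring

open GPT in
/-- If every extreme point of a nonempty compact convex set `C ⊆ ℝ^n` is exposed,
then every minimal exposed face of `C` is a singleton. -/
theorem stmt_6 (n : ℕ) (C : Set (Fin n → ℝ))
    (hne : C.Nonempty) (hcomp : IsCompact C) (hconv : Convex ℝ C)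
    (hexp : ∀ x ∈ C.extremePoints ℝ, IsExposedPoint C x) :
    ∀ M : Set (Fin n → ℝ), IsMinimalExposedFace C M → ∃ x, M = {x} := by
  intro M hM
  obtain ⟨⟨hMne, h, m, hh0, hle, hMeq⟩, hmin⟩ := hM
  -- M is compact
  have hdotcont : Continuous (fun x : Fin n → ℝ => dot h x) := by
    unfold dot
    exact continuous_finset_sum _ fun i _ => (continuous_const.mul (continuous_apply i))
  have hMsub : M ⊆ C := by rw [hMeq]; exact fun x hx => hx.1
  have hMcomp : IsCompact M := by
    rw [hMeq]
    exact hcomp.inter_right (isClosed_eq hdotcont continuous_const)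
  -- M is convex
  have hMconv : Convex ℝ M := by
    rw [hMeq]
    intro x hx y hy a b ha hb hab
    refine ⟨hconv hx.1 hy.1 ha hb hab, ?_⟩
    rw [dot_comb, hx.2, hy.2]
    linear_combination m * hab
  -- M has an extreme point
  obtain ⟨x, hx⟩ := hMcomp.extremePoints_nonempty hMne
  -- x is an extreme point of C
  have hxC : x ∈ C.extremePoints ℝ := by
    rw [mem_extremePoints] at hx ⊢
    obtain ⟨hxM, hext⟩ := hx
    refine ⟨hMsub hxM, fun x₁ hx₁ x₂ hx₂ hseg => ?_⟩
    obtain ⟨a, b, ha, hb, hab, hcomb⟩ := hseg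
    have hxMeq := hxM
    rw [hMeq] at hxMeq
    have hd : a * dot h x₁ + b * dot h x₂ = m := by
      rw [← dot_comb, hcomb]; exact hxMeq.2
    have h1 : dot h x₁ ≤ m := hle x₁ hx₁
    have h2 : dot h x₂ ≤ m := hle x₂ hx₂
    have hd1 : dot h x₁ = m := by
      by_contra hne'
      have hlt : dot h x₁ < m := lt_of_le_of_ne h1 hne'
      have e1 : a * dot h x₁ < a * m := mul_lt_mul_of_pos_left hlt ha
      have e2 : b * dot h x₂ ≤ b * m := mul_le_mul_of_nonneg_left h2 hb.le
      have e3 : a * m + b * m = m := by linear_combination m * hab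
      linarith
    have hd2 : dot h x₂ = m := by
      by_contra hne'
      have hlt : dot h x₂ < m := lt_of_le_of_ne h2 hne'
      have e1 : b * dot h x₂ < b * m := mul_lt_mul_of_pos_left hlt hb
      have e2 : a * dot h x₁ ≤ a * m := mul_le_mul_of_nonneg_left h1 ha.le
      have e3 : a * m + b * m = m := by linear_combination m * hab
      linarith
    have hx₁M : x₁ ∈ M := by rw [hMeq]; exact ⟨hx₁, hd1⟩
    have hx₂M : x₂ ∈ M := by rw [hMeq]; exact ⟨hx₂, hd2⟩
    exact hext x₁ hx₁M x₂ hx₂M ⟨a, b, ha, hb, hab, hcomb⟩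
  -- x is exposed, so {x} is an exposed face; use minimality
  have hface := hexp x hxC
  rcases hmin {x} hface with hcase | hcase
  · refine ⟨x, ?_⟩
    apply Set.Subset.antisymm
    · intro y hy
      have : y ∈ M ∩ {x} := by rw [hcase]; exact hy
      exact this.2
    · intro y hy
      rw [Set.mem_singleton_iff] at hy
      rw [hy]; exact hx.1
  · exfalso
    have : x ∈ M ∩ {x} := ⟨hx.1, rfl⟩
    rw [hcase] at this
    exact this
end

section
/- Let H be a separable complex Hilbert space. Every propensity function v : E(H) → [0,1] admits an expression v(E) = ⟨ψ, Eψ⟩ for all E ∈ E(H) and some unit vector ψ ∈ H. -/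
open scoped ComplexInnerProductSpace

namespace QT

variable {H : Type} [NormedAddCommGroup H] [InnerProductSpace ℂ H] [CompleteSpace H]

/-- A quantum effect on `H`: a bounded self-adjoint operator `E` with `0 ≤ E ≤ I`. -/
def IsEffect (E : H →L[ℂ] H) : Prop :=
  ContinuousLinearMap.IsPositive E ∧ ContinuousLinearMap.IsPositive (1 - E)

/-- A generalized probability measure on the set of quantum effects `E(H)`:
a `[0,1]`-valued assignment with `v(I) = 1` that is countably additive on sequences of
effects whose partial sums converge in the weak operator topology to an effect. -/
def IsGPMEff (v : (H →L[ℂ] H) → ℝ) : Prop :=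
  (∀ E, IsEffect E → v E ∈ Set.Icc (0 : ℝ) 1) ∧
  v 1 = 1 ∧
  ∀ (Es : ℕ → H →L[ℂ] H) (E : H →L[ℂ] H),
    (∀ j, IsEffect (Es j)) →
    IsEffect E →
    (∀ φ ψ : H, Filter.Tendsto (fun N => ⟪φ, (∑ j ∈ Finset.range N, Es j) ψ⟫)
      Filter.atTop (nhds ⟪φ, E ψ⟫)) →
    HasSum (fun j => v (Es j)) (v E)

/-- A propensity function on `E(H)`: a generalized probability measure uniquely determined
(among generalized probability measures, as a map on `E(H)`) by its actual set
`A_v = {E : v E = 1}`. -/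
def IsPropensityEff (v : (H →L[ℂ] H) → ℝ) : Prop :=
  IsGPMEff v ∧ ∀ v', IsGPMEff v' →
    {E | IsEffect E ∧ v' E = 1} = {E | IsEffect E ∧ v E = 1} →
    ∀ E, IsEffect E → v' E = v E

end QT

/-!
Call an effect `F` null if `v F = 0`. Anything below a multiple of a null effect is null, and by
σ-additivity so is a weighted series `∑ 2⁻¹ ^ (k + 1) • F k` of null effects. By separability the
ranges of countably many null effects `F k` are dense in the union of the ranges of all null
effects, and their weighted series is a null effect `G`. It has a nontrivial kernel: otherwise the
effects `min (n G) 1` (functional calculus) would be null and increase strongly to `1`, so their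
increments would be null effects summing to `1`. A unit vector `ψ` in the kernel of `G` is
annihilated by every null effect, hence `⟪ψ, E ψ⟫ = 1` whenever `v E = 1`. Then `v` and the
average of `v` with `E ↦ ⟪ψ, E ψ⟫` have the same actual set, and the propensity property forces
`v E = ⟪ψ, E ψ⟫`.
-/

open ContinuousLinearMap Filter Topology

namespace QT

theorem tendsto_apply_zero_of_dense {𝕜 E F ι : Type*} [NontriviallyNormedField 𝕜]
    [NormedAddCommGroup E] [NormedSpace 𝕜 E] [NormedAddCommGroup F] [NormedSpace 𝕜 F]
    {l : Filter ι} {T : ι → E →L[𝕜] F} {C : ℝ} (hT : ∀ i, ‖T i‖ ≤ C) {s : Set E} (hs : Dense s)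
    (h : ∀ y ∈ s, Tendsto (fun i => T i y) l (𝓝 0)) (x : E) :
    Tendsto (fun i => T i x) l (𝓝 0) := by
  have hequi : Equicontinuous ((↑) ∘ T : ι → E → F) :=
    ((NormedSpace.equicontinuous_TFAE T).out 1 5).2 (⟨C, hT⟩ : ∃ C, ∀ i, ‖T i‖ ≤ C)
  exact (hequi.isClosed_setOfPred_tendsto (f := 0) continuous_const).closure_subset_iff.2 h (hs x)

theorem denseRange_of_isStarNormal_of_injective {𝕜 E : Type*} [RCLike 𝕜] [NormedAddCommGroup E]
    [InnerProductSpace 𝕜 E] [CompleteSpace E] {T : E →L[𝕜] E} (hT : IsStarNormal T)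
    (hinj : Function.Injective T) : DenseRange T := by
  have h := hT.orthogonal_range
  rw [(LinearMap.ker_eq_bot (f := (T : E →ₗ[𝕜] E))).2 hinj] at h
  exact Submodule.dense_iff_topologicalClosure_eq_top.2
    (Submodule.topologicalClosure_eq_top_iff.2 h)

theorem exists_seq_iUnion_subset_closure {X ι : Type*} [TopologicalSpace X]
    [TopologicalSpace.PseudoMetrizableSpace X] [TopologicalSpace.SeparableSpace X] [Nonempty ι]
    (s : ι → Set X) : ∃ k : ℕ → ι, ⋃ i, s i ⊆ closure (⋃ n, s (k n)) := by
  obtain ⟨D, hDs, hDc, hD⟩ :=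
    (TopologicalSpace.IsSeparable.of_separableSpace (⋃ i, s i)).exists_countable_dense_subset
  choose! idx hidx using fun d (hd : d ∈ D) => Set.mem_iUnion.1 (hDs hd)
  obtain ⟨k, hk⟩ := Set.countable_iff_exists_subset_range.1 (hDc.image idx)
  refine ⟨k, hD.trans (closure_mono fun d hd => ?_)⟩
  obtain ⟨n, hn⟩ := hk ⟨d, hd, rfl⟩
  exact Set.mem_iUnion.2 ⟨n, hn ▸ hidx d hd⟩

section Ramp

variable {A : Type*} [CStarAlgebra A]

noncomputable def ramp (n : ℕ) (a : A) : A := cfc (fun t : ℝ => min (n * t) 1) a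

theorem ramp_zero (a : A) : ramp 0 a = 0 := by simp [ramp]

variable [PartialOrder A] [StarOrderedRing A]

theorem ramp_nonneg {a : A} (ha : 0 ≤ a) (n : ℕ) : 0 ≤ ramp n a :=
  cfc_nonneg fun _ ht =>
    le_min (mul_nonneg n.cast_nonneg (spectrum_nonneg_of_nonneg ha ht)) zero_le_one

theorem ramp_le_one (n : ℕ) (a : A) : ramp n a ≤ 1 := cfc_le_one _ _ fun _ _ => min_le_right _ _

theorem ramp_le_smul {a : A} (ha : 0 ≤ a) (n : ℕ) : ramp n a ≤ (n : ℝ) • a := by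
  rw [← cfc_const_mul_id (n : ℝ) a]
  exact cfc_mono fun _ _ => min_le_left _ _

theorem ramp_mono {a : A} (ha : 0 ≤ a) : Monotone (ramp · a) := fun m n hmn =>
  cfc_mono fun t ht => min_le_min_right _ <|
    mul_le_mul_of_nonneg_right (Nat.cast_le.2 hmn) (spectrum_nonneg_of_nonneg ha ht)

theorem norm_one_sub_ramp_mul_le {a : A} (ha : 0 ≤ a) {n : ℕ} (hn : 0 < n) :
    ‖(1 - ramp n a) * a‖ ≤ (n : ℝ)⁻¹ := by
  have hcfc : (1 - ramp n a) * a = cfc (fun t : ℝ => (1 - min (n * t) 1) * t) a := by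
    rw [cfc_mul _ _ a, cfc_sub _ _ a, cfc_const_one ℝ a, cfc_id' ℝ a, ramp]
  rw [hcfc]
  refine norm_cfc_le (by positivity) fun t ht => ?_
  have ht₀ := spectrum_nonneg_of_nonneg ha ht
  have hn' : (0 : ℝ) < n := Nat.cast_pos.2 hn
  have hprod : 0 ≤ (1 - min (n * t) 1) * t := mul_nonneg (sub_nonneg.2 (min_le_right _ _)) ht₀
  rw [Real.norm_eq_abs, abs_of_nonneg hprod, ← one_div, le_div_iff₀ hn']
  rcases min_cases ((n : ℝ) * t) 1 with ⟨h, hle⟩ | ⟨h, -⟩ <;> rw [h]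
  · nlinarith [mul_nonneg hn'.le ht₀]
  · simp

end Ramp

variable {H : Type} [NormedAddCommGroup H] [InnerProductSpace ℂ H]

theorem isEffect_iff {E : H →L[ℂ] H} : IsEffect E ↔ 0 ≤ E ∧ E ≤ 1 :=
  (nonneg_iff_isPositive E).symm.and (le_def E 1).symm

theorem IsEffect.of_nonneg_of_le {E F : H →L[ℂ] H} (hF : IsEffect F) (hE : 0 ≤ E) (hEF : E ≤ F) :
    IsEffect E :=
  isEffect_iff.2 ⟨hE, hEF.trans (isEffect_iff.1 hF).2⟩

def actualSet (v : (H →L[ℂ] H) → ℝ) : Set (H →L[ℂ] H) := {E | IsEffect E ∧ v E = 1}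

namespace IsGPMEff

variable {v w : (H →L[ℂ] H) → ℝ}

theorem nonneg (hv : IsGPMEff v) {E : H →L[ℂ] H} (hE : IsEffect E) : 0 ≤ v E := (hv.1 E hE).1

theorem le_one (hv : IsGPMEff v) {E : H →L[ℂ] H} (hE : IsEffect E) : v E ≤ 1 := (hv.1 E hE).2

theorem hasSum_of_tendsto_apply (hv : IsGPMEff v) {Es : ℕ → H →L[ℂ] H} {E : H →L[ℂ] H}
    (hEs : ∀ j, IsEffect (Es j)) (hE : IsEffect E)
    (h : ∀ x, Tendsto (fun N => (∑ j ∈ Finset.range N, Es j) x) atTop (𝓝 (E x))) :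
    HasSum (fun j => v (Es j)) (v E) :=
  hv.2.2 Es E hEs hE fun _ x => tendsto_const_nhds.inner (h x)

theorem convexComb (hv : IsGPMEff v) (hw : IsGPMEff w) {t : ℝ} (ht₀ : 0 ≤ t) (ht₁ : t ≤ 1) :
    IsGPMEff (fun E => t * v E + (1 - t) * w E) := by
  refine ⟨fun E hE => ⟨?_, ?_⟩, by simp [hv.2.1, hw.2.1], fun Es E hEs hE h => ?_⟩
  · nlinarith [hv.nonneg hE, hw.nonneg hE]
  · nlinarith [hv.le_one hE, hw.le_one hE]
  · exact ((hv.2.2 Es E hEs hE h).mul_left t).add ((hw.2.2 Es E hEs hE h).mul_left (1 - t))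

theorem actualSet_convexComb (hv : IsGPMEff v) (hw : IsGPMEff w) {t : ℝ} (ht₀ : 0 < t)
    (ht₁ : t < 1) (hvw : actualSet v ⊆ actualSet w) :
    actualSet (fun E => t * v E + (1 - t) * w E) = actualSet v := by
  ext E
  refine ⟨fun ⟨hE, h⟩ => ⟨hE, ?_⟩, fun hE => ⟨hE.1, ?_⟩⟩
  · nlinarith [hv.le_one hE, hw.le_one hE]
  · simp [hE.2, (hvw hE).2]

end IsGPMEff

noncomputable def bornRule (ψ : H) (E : H →L[ℂ] H) : ℝ := (⟪ψ, E ψ⟫).re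

theorem ofReal_bornRule (ψ : H) {E : H →L[ℂ] H} (hE : IsEffect E) :
    (bornRule ψ E : ℂ) = ⟪ψ, E ψ⟫ :=
  Complex.ext rfl (hE.1.inner_nonneg_right ψ).2

theorem isGPMEff_bornRule {ψ : H} (hψ : ‖ψ‖ = 1) : IsGPMEff (bornRule ψ) := by
  have hψψ : bornRule ψ 1 = 1 := by simp [bornRule, hψ]
  refine ⟨fun E hE => ⟨hE.1.re_inner_nonneg_right ψ, ?_⟩, hψψ, fun Es E hEs hE h => ?_⟩
  · have h₁ := hE.2.re_inner_nonneg_right ψ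
    simp only [sub_apply, inner_sub_right] at h₁
    simpa [bornRule, hψ] using h₁
  · have hnn : ∀ j, 0 ≤ bornRule ψ (Es j) := fun j => (hEs j).1.re_inner_nonneg_right ψ
    rw [hasSum_iff_tendsto_nat_of_nonneg hnn]
    simpa [bornRule, inner_sum, Function.comp_def] using
      (Complex.continuous_re.tendsto _).comp (h ψ ψ)

variable [CompleteSpace H]

theorem isEffect_zero : IsEffect (0 : H →L[ℂ] H) := isEffect_iff.2 ⟨le_rfl, zero_le_one⟩

theorem isEffect_one : IsEffect (1 : H →L[ℂ] H) := isEffect_iff.2 ⟨zero_le_one, le_rfl⟩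

theorem IsEffect.one_sub {E : H →L[ℂ] H} (hE : IsEffect E) : IsEffect (1 - E) := by
  obtain ⟨h₀, h₁⟩ := isEffect_iff.1 hE
  exact isEffect_iff.2 ⟨sub_nonneg.2 h₁, sub_le_self _ h₀⟩

theorem IsEffect.smul {E : H →L[ℂ] H} (hE : IsEffect E) {c : ℝ} (hc₀ : 0 ≤ c) (hc₁ : c ≤ 1) :
    IsEffect (c • E) := by
  have h₀ := (isEffect_iff.1 hE).1
  refine hE.of_nonneg_of_le (smul_nonneg hc₀ h₀) ?_
  simpa using smul_le_smul_of_nonneg_right hc₁ h₀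

theorem IsEffect.norm_le_one {E : H →L[ℂ] H} (hE : IsEffect E) : ‖E‖ ≤ 1 :=
  (CStarAlgebra.norm_le_one_iff_of_nonneg E (isEffect_iff.1 hE).1).2 (isEffect_iff.1 hE).2

theorem isEffect_ramp {G : H →L[ℂ] H} (hG : 0 ≤ G) (n : ℕ) : IsEffect (ramp n G) :=
  isEffect_iff.2 ⟨ramp_nonneg hG n, ramp_le_one n G⟩

theorem apply_eq_zero_of_re_inner_eq_zero {F : H →L[ℂ] H} (hF : 0 ≤ F) {x : H}
    (h : (⟪x, F x⟫).re = 0) : F x = 0 := by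
  set S := CFC.sqrt F
  have hFx : F x = S (S x) := by rw [← CFC.sqrt_mul_sqrt_self F]; rfl
  have hSx : S x = 0 := by
    have hSS : ⟪S x, S x⟫ = ⟪x, F x⟫ :=
      hFx ▸ (CFC.sqrt_nonneg F).isSelfAdjoint.isSymmetric x (S x)
    rw [← inner_self_eq_zero (𝕜 := ℂ), hSS]
    exact Complex.ext h ((nonneg_iff_isPositive F).1 hF |>.inner_nonneg_right x).2.symm
  rw [hFx, hSx, map_zero]

theorem apply_eq_zero_of_le_smul {F G : H →L[ℂ] H} (hF : 0 ≤ F) {c : ℝ} (hFG : F ≤ c • G)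
    {x : H} (hx : G x = 0) : F x = 0 := by
  refine apply_eq_zero_of_re_inner_eq_zero hF (le_antisymm ?_ ?_)
  · simpa [hx] using ((le_def _ _).1 hFG).re_inner_nonneg_right x
  · exact ((nonneg_iff_isPositive F).1 hF).re_inner_nonneg_right x

theorem tendsto_ramp_apply {G : H →L[ℂ] H} (hG : 0 ≤ G) (hinj : Function.Injective G) (x : H) :
    Tendsto (fun n => ramp n G x) atTop (𝓝 x) := by
  suffices Tendsto (fun n => (1 - ramp n G) x) atTop (𝓝 0) by
    simpa using this.const_sub x
  refine tendsto_apply_zero_of_dense (fun n => (isEffect_ramp hG n).one_sub.norm_le_one)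
    (denseRange_of_isStarNormal_of_injective hG.isSelfAdjoint.isStarNormal hinj) ?_ x
  rintro _ ⟨z, rfl⟩
  refine squeeze_zero_norm' (a := fun n : ℕ => (n : ℝ)⁻¹ * ‖z‖) ?_ ?_
  · filter_upwards [eventually_gt_atTop 0] with n hn
    calc ‖(1 - ramp n G) (G z)‖ = ‖((1 - ramp n G) * G) z‖ := rfl
      _ ≤ ‖(1 - ramp n G) * G‖ * ‖z‖ := le_opNorm _ _
      _ ≤ (n : ℝ)⁻¹ * ‖z‖ := by gcongr; exact norm_one_sub_ramp_mul_le hG hn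
  · simpa using (tendsto_inv_atTop_nhds_zero_nat (𝕜 := ℝ)).mul_const ‖z‖

namespace IsGPMEff

variable {v : (H →L[ℂ] H) → ℝ}

theorem map_zero (hv : IsGPMEff v) : v 0 = 0 := by
  have h := hv.hasSum_of_tendsto_apply (fun _ => isEffect_zero) isEffect_zero fun _ => by simp
  exact tendsto_nhds_unique tendsto_const_nhds h.summable.tendsto_atTop_zero

theorem map_add (hv : IsGPMEff v) {E F : H →L[ℂ] H} (hE : IsEffect E) (hF : IsEffect F)
    (hEF : IsEffect (E + F)) : v (E + F) = v E + v F := by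
  set Es : ℕ → H →L[ℂ] H := fun j => if j = 0 then E else if j = 1 then F else 0
  have hEs : ∀ j, IsEffect (Es j) := fun j => by
    rcases j with _ | _ | j <;> simp [Es, hE, hF, isEffect_zero]
  have hpartial : ∀ N, ∑ j ∈ Finset.range (N + 2), Es j = E + F := fun N => by
    simp [Finset.sum_range_succ', Es, add_comm]
  have hsum := hv.hasSum_of_tendsto_apply hEs hEF fun x =>
    tendsto_atTop_of_eventually_const (i₀ := 2) fun N hN => by
      obtain ⟨N, rfl⟩ := Nat.exists_eq_add_of_le' hN
      rw [hpartial]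
  refine hsum.unique (hasSum_sum_of_ne_finset_zero (s := Finset.range 2) fun j hj => ?_)
    |>.trans (by simp [Finset.sum_range_succ, Es])
  have hj2 : 1 < j := by simpa using hj
  simp [Es, hv.map_zero, show j ≠ 0 by omega, show j ≠ 1 by omega]

theorem mono (hv : IsGPMEff v) {E F : H →L[ℂ] H} (hF : IsEffect F) (hE : 0 ≤ E) (hEF : E ≤ F) :
    v E ≤ v F := by
  have hFE : IsEffect (F - E) := hF.of_nonneg_of_le (sub_nonneg.2 hEF) (sub_le_self _ hE)
  have hsplit := hv.map_add (hF.of_nonneg_of_le hE hEF) hFE (by simpa using hF)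
  rw [add_sub_cancel] at hsplit
  linarith [hv.nonneg hFE]

theorem map_one_sub (hv : IsGPMEff v) {E : H →L[ℂ] H} (hE : IsEffect E) :
    v (1 - E) = 1 - v E := by
  have hsplit := hv.map_add hE hE.one_sub (by simpa using isEffect_one)
  rw [add_sub_cancel, hv.2.1] at hsplit
  linarith

theorem map_eq_two_pow_mul (hv : IsGPMEff v) {E : H →L[ℂ] H} (hE : IsEffect E) (k : ℕ) :
    v E = 2 ^ k * v (((2 : ℝ)⁻¹ ^ k) • E) := by
  induction k generalizing E with
  | zero => simp
  | succ k ih =>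
    have hhalf : IsEffect ((2 : ℝ)⁻¹ • E) := hE.smul (by norm_num) (by norm_num)
    have hdouble : (2 : ℝ)⁻¹ • E + (2 : ℝ)⁻¹ • E = E := by rw [← add_smul]; norm_num
    have hsplit := hv.map_add hhalf hhalf (by rw [hdouble]; exact hE)
    rw [hdouble] at hsplit
    rw [hsplit, ih hhalf, smul_smul, ← pow_succ]
    ring

theorem map_eq_zero_of_le_smul (hv : IsGPMEff v) {E G : H →L[ℂ] H} (hE : IsEffect E)
    (hG : IsEffect G) (hvG : v G = 0) {c : ℝ} (hEG : E ≤ c • G) : v E = 0 := by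
  obtain ⟨k, hk⟩ := pow_unbounded_of_one_lt c (one_lt_two : (1 : ℝ) < 2)
  have hck : (2 : ℝ)⁻¹ ^ k * c ≤ 1 := by
    rw [inv_pow, inv_mul_le_iff₀ (by positivity)]; linarith
  have hsmall : IsEffect (((2 : ℝ)⁻¹ ^ k) • E) :=
    hE.smul (by positivity) (pow_le_one₀ (by norm_num) (by norm_num))
  have hle : ((2 : ℝ)⁻¹ ^ k) • E ≤ G := calc
    ((2 : ℝ)⁻¹ ^ k) • E ≤ ((2 : ℝ)⁻¹ ^ k) • c • G :=
      smul_le_smul_of_nonneg_left hEG (by positivity)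
    _ = ((2 : ℝ)⁻¹ ^ k * c) • G := smul_smul _ _ _
    _ ≤ (1 : ℝ) • G := smul_le_smul_of_nonneg_right hck (isEffect_iff.1 hG).1
    _ = G := one_smul _ _
  have h₀ := le_antisymm (hvG ▸ hv.mono hG (isEffect_iff.1 hsmall).1 hle) (hv.nonneg hsmall)
  rw [hv.map_eq_two_pow_mul hE k, h₀, mul_zero]

theorem actualSet_subset_bornRule (hv : IsGPMEff v) {ψ : H} (hψ : ‖ψ‖ = 1)
    (hnull : ∀ F, IsEffect F → v F = 0 → F ψ = 0) : actualSet v ⊆ actualSet (bornRule ψ) := by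
  rintro E ⟨hE, hvE⟩
  have hψE : (1 - E) ψ = 0 := hnull _ hE.one_sub (by rw [hv.map_one_sub hE, hvE, sub_self])
  have hEψ : E ψ = ψ := (sub_eq_zero.1 (by simpa using hψE)).symm
  exact ⟨hE, by simpa [bornRule, hEψ] using (isGPMEff_bornRule hψ).2.1⟩

theorem exists_ne_zero_apply_eq_zero (hv : IsGPMEff v) {G : H →L[ℂ] H} (hG : IsEffect G)
    (hvG : v G = 0) : ∃ x, x ≠ 0 ∧ G x = 0 := by
  by_contra! hker
  have hinj : Function.Injective G :=
    (injective_iff_map_eq_zero G).2 fun x hx => by_contra fun h => hker x h hx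
  have hG₀ := (isEffect_iff.1 hG).1
  set Es : ℕ → H →L[ℂ] H := fun j => ramp (j + 1) G - ramp j G
  have hEs_le : ∀ j, Es j ≤ ramp (j + 1) G := fun j => sub_le_self _ (ramp_nonneg hG₀ j)
  have hEs : ∀ j, IsEffect (Es j) := fun j =>
    (isEffect_ramp hG₀ _).of_nonneg_of_le (sub_nonneg.2 (ramp_mono hG₀ j.le_succ)) (hEs_le j)
  have hnull : ∀ j, v (Es j) = 0 := fun j =>
    hv.map_eq_zero_of_le_smul (hEs j) hG hvG ((hEs_le j).trans (ramp_le_smul hG₀ _))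
  have hsum := hv.hasSum_of_tendsto_apply hEs isEffect_one fun x => by
    simp only [Es, Finset.sum_range_sub (ramp · G), ramp_zero, sub_zero]
    exact tendsto_ramp_apply hG₀ hinj x
  simp only [hnull, hv.2.1] at hsum
  exact one_ne_zero (hsum.unique hasSum_zero)

theorem exists_null_forall_le_smul (hv : IsGPMEff v) {F : ℕ → H →L[ℂ] H}
    (hF : ∀ k, IsEffect (F k)) (hvF : ∀ k, v (F k) = 0) :
    ∃ G, IsEffect G ∧ v G = 0 ∧ ∀ k, ∃ c : ℝ, F k ≤ c • G := by
  set w : ℕ → ℝ := fun k => 1 / 2 / 2 ^ k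
  have hw : HasSum w 1 := hasSum_geometric_two' 1
  have hw₀ : ∀ k, 0 < w k := fun k => by positivity
  have hw₁ : ∀ k, w k ≤ 1 := fun k => le_hasSum hw k fun j _ => (hw₀ j).le
  set Es : ℕ → H →L[ℂ] H := fun k => w k • F k
  have hEs : ∀ k, IsEffect (Es k) := fun k => (hF k).smul (hw₀ k).le (hw₁ k)
  have hEs₀ : ∀ k, 0 ≤ Es k := fun k => (isEffect_iff.1 (hEs k)).1
  obtain ⟨G, hG⟩ : Summable Es := hw.summable.of_norm_bounded fun k => by
    simpa [Es, norm_smul, abs_of_pos (hw₀ k)] using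
      mul_le_of_le_one_right (hw₀ k).le (hF k).norm_le_one
  have hGeff : IsEffect G := isEffect_iff.2 ⟨hasSum_le hEs₀ hasSum_zero hG,
    hasSum_le (fun k => smul_le_smul_of_nonneg_left (isEffect_iff.1 (hF k)).2 (hw₀ k).le) hG
      (by simpa using hw.smul_const (1 : H →L[ℂ] H))⟩
  have hvG : v G = 0 := by
    have hsum := hv.hasSum_of_tendsto_apply hEs hGeff fun x =>
      ((apply ℂ H x).continuous.tendsto G).comp hG.tendsto_sum_nat
    have hnull : ∀ k, v (Es k) = 0 := fun k =>
      hv.map_eq_zero_of_le_smul (hEs k) (hF k) (hvF k) le_rfl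
    simp only [hnull] at hsum
    exact hsum.unique hasSum_zero
  refine ⟨G, hGeff, hvG, fun k => ⟨(w k)⁻¹, ?_⟩⟩
  calc F k = (w k)⁻¹ • Es k := by simp [Es, smul_smul, inv_mul_cancel₀ (hw₀ k).ne']
    _ ≤ (w k)⁻¹ • G :=
      smul_le_smul_of_nonneg_left (le_hasSum hG k fun j _ => hEs₀ j) (inv_nonneg.2 (hw₀ k).le)

theorem exists_norm_eq_one_forall_apply_eq_zero [TopologicalSpace.SeparableSpace H]
    (hv : IsGPMEff v) : ∃ ψ : H, ‖ψ‖ = 1 ∧ ∀ F, IsEffect F → v F = 0 → F ψ = 0 := by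
  have : Nonempty {F : H →L[ℂ] H // IsEffect F ∧ v F = 0} := ⟨⟨0, isEffect_zero, hv.map_zero⟩⟩
  obtain ⟨k, hk⟩ := exists_seq_iUnion_subset_closure
    fun F : {F : H →L[ℂ] H // IsEffect F ∧ v F = 0} => Set.range F.1
  obtain ⟨G, hG, hvG, hdom⟩ := hv.exists_null_forall_le_smul (fun n => (k n).2.1) fun n => (k n).2.2
  obtain ⟨x, hx, hGx⟩ := hv.exists_ne_zero_apply_eq_zero hG hvG
  set ψ : H := (‖x‖⁻¹ : ℂ) • x
  refine ⟨ψ, norm_smul_inv_norm hx, fun F hF hvF => ?_⟩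
  have hkψ : ∀ n, (k n).1 ψ = 0 := fun n => by
    obtain ⟨c, hc⟩ := hdom n
    exact apply_eq_zero_of_le_smul (isEffect_iff.1 (k n).2.1).1 hc (by simp [ψ, hGx])
  have horth : ⋃ n, Set.range (k n).1 ⊆ {y | ⟪ψ, y⟫ = 0} := by
    rintro _ ⟨_, ⟨n, rfl⟩, z, rfl⟩
    simpa [hkψ n] using ((k n).2.1.1.isSelfAdjoint.isSymmetric ψ z).symm
  have hclosed : IsClosed {y : H | ⟪ψ, y⟫ = 0} :=
    isClosed_eq (continuous_const.inner continuous_id) continuous_const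
  have hψF : ⟪ψ, F ψ⟫ = 0 :=
    hclosed.closure_subset_iff.2 horth (hk (Set.mem_iUnion.2 ⟨⟨F, hF, hvF⟩, ψ, rfl⟩))
  exact apply_eq_zero_of_re_inner_eq_zero (isEffect_iff.1 hF).1 (by simp [hψF])

end IsGPMEff

end QT

open QT in
/-- On a separable complex Hilbert space, every propensity function on the set
of quantum effects is given by the Born rule for some unit vector `ψ`. -/
theorem stmt_11 (H : Type) [NormedAddCommGroup H] [InnerProductSpace ℂ H] [CompleteSpace H]
    [TopologicalSpace.SeparableSpace H]
    (v : (H →L[ℂ] H) → ℝ) (hv : IsPropensityEff v) :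
    ∃ ψ : H, ‖ψ‖ = 1 ∧ ∀ E, IsEffect E → (v E : ℂ) = ⟪ψ, E ψ⟫ := by
  obtain ⟨hv, hunique⟩ := hv
  obtain ⟨ψ, hψ, hnull⟩ := hv.exists_norm_eq_one_forall_apply_eq_zero
  have hborn := isGPMEff_bornRule hψ
  have hmix := hv.convexComb hborn (t := 2⁻¹) (by norm_num) (by norm_num)
  have hsame := hv.actualSet_convexComb hborn (t := 2⁻¹) (by norm_num) (by norm_num)
    (hv.actualSet_subset_bornRule hψ hnull)
  refine ⟨ψ, hψ, fun E hE => ?_⟩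
  rw [← ofReal_bornRule ψ hE]
  congr 1
  linarith [hunique _ hmix hsame E hE]
end

section
/- There are no propensity functions on P(ℂ²): for every Gisin measure v on P(ℂ²) there exists a Gisin measure w on P(ℂ²) with w ≠ v and A_w = A_v. -/
open scoped ComplexInnerProductSpace

namespace QT2

/-- The two-dimensional complex Hilbert space `ℂ²`. -/
abbrev H2 : Type := EuclideanSpace ℂ (Fin 2)

/-- Bounded operators on `ℂ²`. -/
abbrev Op : Type := H2 →L[ℂ] H2

/-- An orthogonal projection on `ℂ²`: a self-adjoint idempotent operator. -/
def IsOrthProj (P : Op) : Prop := IsSelfAdjoint P ∧ P ∘L P = P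

/-- The orthogonal projection onto a subspace of `ℂ²`, as an operator. -/
noncomputable def projOnto (K : Submodule ℂ H2) : Op :=
  K.subtypeL ∘L K.orthogonalProjectionOnto

/-- A generalized probability measure on `P(ℂ²)`: a `[0,1]`-valued assignment with
`v(I) = 1` that is additive on finite sequences of pairwise orthogonal projections whose
sum is a projection. -/
def IsGPM2 (v : Op → ℝ) : Prop :=
  (∀ P, IsOrthProj P → v P ∈ Set.Icc (0 : ℝ) 1) ∧
  v 1 = 1 ∧
  ∀ (n : ℕ) (Ps : Fin n → Op),
    (∀ j, IsOrthProj (Ps j)) →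
    (Pairwise fun i j => Ps i ∘L Ps j = 0) →
    IsOrthProj (∑ j, Ps j) →
    v (∑ j, Ps j) = ∑ j, v (Ps j)

/-- A Gisin measure on `P(ℂ²)`: a generalized probability measure such that, whenever every
member of a set `K` of projections is assigned probability one, so is the projection onto the
intersection of the ranges of the members of `K`. -/
def IsGisin (v : Op → ℝ) : Prop :=
  IsGPM2 v ∧
  ∀ K : Set Op, (∀ P ∈ K, IsOrthProj P) → (∀ P ∈ K, v P = 1) →
    v (projOnto (⨅ P ∈ K, LinearMap.range (P : H2 →ₗ[ℂ] H2))) = 1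

end QT2

/-!
A Gisin measure `v` on `P(ℂ²)` is never `{0,1}`-valued. Applied to the whole actual set, the
Gisin condition gives a nonzero vector `m` fixed by every projection of measure one; but for a
subspace `K` containing neither `m` nor any vector orthogonal to `m`, one of `P_K` and
`P_{Kᗮ} = 1 - P_K` has measure one. So some projection `P` has `0 < v P < 1`.

In `ℂ²` two orthogonal nonzero projections are complementary, so additivity only constrains the
sums `v Q + v (1 - Q)`. Moving the values at `P` and `1 - P` to `t` and `1 - t`, with
`t ∈ (0, 1)`, `t ≠ v P`, therefore gives another generalized probability measure with the same
actual set, and it is a Gisin measure because the Gisin condition only sees the actual set.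
-/

lemma IsIdempotentElem.one_sub_ne_self {R : Type*} [Ring R] [Nontrivial R] {p : R}
    (hp : IsIdempotentElem p) : 1 - p ≠ p := by
  intro h
  have hp0 : p = 0 := by rw [← hp.mul_one_sub_self, h, hp.eq]
  exact one_ne_zero (by rwa [hp0, sub_zero] at h)

section InnerProductSpace

open scoped InnerProductSpace

variable {𝕜 E : Type*} [RCLike 𝕜] [NormedAddCommGroup E] [InnerProductSpace 𝕜 E]

lemma IsIdempotentElem.exists_apply_eq_self {P : E →L[𝕜] E} (hP : IsIdempotentElem P)
    (hP0 : P ≠ 0) : ∃ x, x ≠ 0 ∧ P x = x := by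
  obtain ⟨z, hz⟩ : ∃ z, P z ≠ 0 := by
    by_contra! h
    exact hP0 (ContinuousLinearMap.ext h)
  exact ⟨P z, hz, congr($hP z)⟩

lemma IsStarProjection.add_eq_one_of_mul_eq_zero [CompleteSpace E]
    (hE : Module.finrank 𝕜 E = 2) {P Q : E →L[𝕜] E} (hP : IsStarProjection P)
    (hQ : IsStarProjection Q) (hPQ : P * Q = 0) (hP0 : P ≠ 0) (hQ0 : Q ≠ 0) : P + Q = 1 := by
  have hQP : Q * P = 0 := by
    simpa [hP.isSelfAdjoint.star_eq, hQ.isSelfAdjoint.star_eq] using congr(star $hPQ)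
  obtain ⟨x, hx0, hx⟩ := hP.isIdempotentElem.exists_apply_eq_self hP0
  obtain ⟨y, hy0, hy⟩ := hQ.isIdempotentElem.exists_apply_eq_self hQ0
  have hQx : Q x = 0 := by rw [← hx]; exact congr($hQP x)
  have hPy : P y = 0 := by rw [← hy]; exact congr($hPQ y)
  have hxy : ⟪x, y⟫_𝕜 = 0 := by
    rw [← hx, ← hP.isSelfAdjoint.adjoint_eq, ContinuousLinearMap.adjoint_inner_left, hPy,
      inner_zero_right]
  have hli : LinearIndependent 𝕜 ![x, y] := by
    refine linearIndependent_of_ne_zero_of_inner_eq_zero (by simp [Fin.forall_fin_two, hx0, hy0]) ?_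
    intro i j hij
    fin_cases i <;> fin_cases j <;> simp_all [inner_eq_zero_symm]
  have hspan := hli.span_eq_top_of_card_eq_finrank (by simp [hE])
  refine ContinuousLinearMap.coe_injective (LinearMap.ext_on_range hspan ?_)
  simp [Fin.forall_fin_two, hx, hy, hQx, hPy]

lemma exists_notMem_and_notMem_orthogonal [FiniteDimensional 𝕜 E]
    (hE : 1 < Module.finrank 𝕜 E) {m : E} (hm : m ≠ 0) :
    ∃ K : Submodule 𝕜 E, m ∉ K ∧ m ∉ Kᗮ := by
  obtain ⟨n, hn, hn0⟩ : ∃ n ∈ (𝕜 ∙ m)ᗮ, n ≠ 0 := by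
    refine Submodule.exists_mem_ne_zero_of_ne_bot fun h => ?_
    have := (𝕜 ∙ m).finrank_add_finrank_orthogonal
    rw [h, finrank_bot, finrank_span_singleton hm] at this
    omega
  have hnm : ⟪n, m⟫_𝕜 = 0 :=
    inner_eq_zero_symm.1 (Submodule.mem_orthogonal_singleton_iff_inner_right.1 hn)
  refine ⟨𝕜 ∙ (m + n), fun hmK => ?_, fun hmK => ?_⟩
  · obtain ⟨a, ha⟩ := Submodule.mem_span_singleton.1 hmK
    have hinner : a * ⟪n, n⟫_𝕜 = 0 := by
      simpa [inner_smul_right, inner_add_right, hnm] using congr(⟪n, $ha⟫_𝕜)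
    have ha0 : a = 0 := by simpa [inner_self_eq_zero, hn0] using hinner
    exact hm (by rw [← ha, ha0, zero_smul])
  · have hinner := Submodule.mem_orthogonal_singleton_iff_inner_right.1 hmK
    rw [inner_add_left, hnm, add_zero, inner_self_eq_zero] at hinner
    exact hm hinner

end InnerProductSpace

namespace QT2

lemma isOrthProj_iff_isStarProjection {P : Op} : IsOrthProj P ↔ IsStarProjection P :=
  ⟨fun h => ⟨h.2, h.1⟩, fun h => ⟨h.2, h.1⟩⟩

lemma isOrthProj_zero : IsOrthProj 0 :=
  isOrthProj_iff_isStarProjection.2 (IsStarProjection.zero Op)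

lemma isOrthProj_one : IsOrthProj 1 :=
  isOrthProj_iff_isStarProjection.2 (IsStarProjection.one Op)

lemma IsOrthProj.one_sub {P : Op} (hP : IsOrthProj P) : IsOrthProj (1 - P) :=
  isOrthProj_iff_isStarProjection.2 (isOrthProj_iff_isStarProjection.1 hP).one_sub

lemma projOnto_eq_starProjection (K : Submodule ℂ H2) : projOnto K = K.starProjection := rfl

lemma isOrthProj_projOnto (K : Submodule ℂ H2) : IsOrthProj (projOnto K) :=
  isOrthProj_iff_isStarProjection.2 isStarProjection_starProjection

lemma projOnto_bot : projOnto ⊥ = 0 := Submodule.starProjection_bot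
lemma IsGPM2.map_zero {v : Op → ℝ} (hv : IsGPM2 v) : v 0 = 0 := by
  have h := hv.2.2 2 (fun _ => 0) (fun _ => isOrthProj_zero) (fun _ _ _ => by simp)
    (by simpa using isOrthProj_zero)
  simp only [Finset.sum_const_zero, Fin.sum_univ_two] at h
  linarith

lemma IsGPM2.add_one_sub {v : Op → ℝ} (hv : IsGPM2 v) {P : Op} (hP : IsOrthProj P) :
    v P + v (1 - P) = 1 := by
  have hP' := isOrthProj_iff_isStarProjection.1 hP
  have h := hv.2.2 2 ![P, 1 - P] (Fin.forall_fin_two.2 ⟨hP, hP.one_sub⟩)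
    (by
      intro i j hij
      fin_cases i <;> fin_cases j
      exacts [absurd rfl hij, hP'.mul_one_sub_self, hP'.one_sub_mul_self, absurd rfl hij])
    (by simpa using isOrthProj_one)
  simpa [hv.2.1] using h.symm

lemma isGPM2_of_add_one_sub {w : Op → ℝ} (hmem : ∀ P, IsOrthProj P → w P ∈ Set.Icc 0 1)
    (hone : w 1 = 1) (hcompl : ∀ P, IsOrthProj P → w P + w (1 - P) = 1) : IsGPM2 w := by
  have hzero : w 0 = 0 := by simpa [hone] using hcompl 0 isOrthProj_zero
  refine ⟨hmem, hone, fun n Ps hPs horth _ => ?_⟩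
  by_cases htwo : ∃ i j, i ≠ j ∧ Ps i ≠ 0 ∧ Ps j ≠ 0
  · obtain ⟨i, j, hij, hi, hj⟩ := htwo
    have hsum : Ps i + Ps j = 1 := IsStarProjection.add_eq_one_of_mul_eq_zero (by simp)
      (isOrthProj_iff_isStarProjection.1 (hPs i)) (isOrthProj_iff_isStarProjection.1 (hPs j))
      (horth hij) hi hj
    have hrest : ∀ k, k ≠ i → k ≠ j → Ps k = 0 := fun k hki hkj => by
      calc Ps k = Ps k * (Ps i + Ps j) := by rw [hsum, mul_one]
        _ = Ps k ∘L Ps i + Ps k ∘L Ps j := mul_add _ _ _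
        _ = 0 := by rw [horth hki, horth hkj, add_zero]
    rw [Finset.sum_eq_add_of_mem i j (Finset.mem_univ _) (Finset.mem_univ _) hij
        (fun k _ hk => hrest k hk.1 hk.2),
      Finset.sum_eq_add_of_mem i j (Finset.mem_univ _) (Finset.mem_univ _) hij
        (fun k _ hk => by rw [hrest k hk.1 hk.2, hzero]),
      hsum, hone, eq_sub_of_add_eq' hsum, hcompl _ (hPs i)]
  · push Not at htwo
    by_cases hex : ∃ i, Ps i ≠ 0
    · obtain ⟨i, hi⟩ := hex
      have hrest : ∀ k, k ≠ i → Ps k = 0 := fun k hk => htwo i k (Ne.symm hk) hi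
      rw [Finset.sum_eq_single i (fun k _ hk => hrest k hk) (by simp),
        Finset.sum_eq_single i (fun k _ hk => by rw [hrest k hk, hzero]) (by simp)]
    · push Not at hex
      simp [hex, hzero]

lemma IsGisin.of_eq_one_iff {v w : Op → ℝ} (hv : IsGisin v) (hw : IsGPM2 w)
    (h : ∀ P, w P = 1 ↔ v P = 1) : IsGisin w :=
  ⟨hw, fun K hK hK1 => (h _).2 (hv.2 K hK fun P hP => (h P).1 (hK1 P hP))⟩

lemma IsGisin.exists_ne_zero_forall_apply_eq_self {v : Op → ℝ} (hv : IsGisin v) :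
    ∃ m : H2, m ≠ 0 ∧ ∀ P, IsOrthProj P → v P = 1 → P m = m := by
  set M := ⨅ P ∈ {P | IsOrthProj P ∧ v P = 1}, LinearMap.range (P : H2 →ₗ[ℂ] H2)
  have hM : v (projOnto M) = 1 := hv.2 _ (fun P hP => hP.1) (fun P hP => hP.2)
  obtain ⟨m, hmM, hm⟩ := Submodule.exists_mem_ne_zero_of_ne_bot (p := M) fun h => by
    rw [h, projOnto_bot, hv.1.map_zero] at hM
    exact zero_ne_one hM
  refine ⟨m, hm, fun P hP hvP => ?_⟩
  obtain ⟨z, rfl⟩ := (Submodule.mem_iInf _).1 ((Submodule.mem_iInf _).1 hmM P) ⟨hP, hvP⟩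
  exact congr($(hP.2) z)

lemma IsGisin.exists_mem_Ioo {v : Op → ℝ} (hv : IsGisin v) :
    ∃ P, IsOrthProj P ∧ v P ∈ Set.Ioo 0 1 := by
  by_contra! h
  obtain ⟨m, hm, hfix⟩ := hv.exists_ne_zero_forall_apply_eq_self
  obtain ⟨K, hmK, hmK'⟩ := exists_notMem_and_notMem_orthogonal (𝕜 := ℂ) (by simp) hm
  have hK := isOrthProj_projOnto K
  have hsum : v (projOnto K) + v (projOnto Kᗮ) = 1 := by
    rw [projOnto_eq_starProjection Kᗮ, K.starProjection_orthogonal']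
    exact hv.1.add_one_sub hK
  have hKval : v (projOnto K) = 0 ∨ v (projOnto K) = 1 := by
    obtain ⟨h0, h1⟩ := hv.1.1 _ hK
    by_contra! hne
    exact h _ hK ⟨lt_of_le_of_ne h0 (Ne.symm hne.1), lt_of_le_of_ne h1 hne.2⟩
  rcases hKval with h0 | h1
  · exact hmK' (Submodule.starProjection_eq_self_iff.1
      (hfix (projOnto Kᗮ) (isOrthProj_projOnto _) (by linarith)))
  · exact hmK (Submodule.starProjection_eq_self_iff.1 (hfix _ hK h1))

open Classical in
noncomputable def reweight (v : Op → ℝ) (P : Op) (t : ℝ) : Op → ℝ :=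
  Function.update (Function.update v P t) (1 - P) (1 - t)

section reweight

variable {v : Op → ℝ} {P : Op} {t : ℝ}

lemma reweight_apply_self (hP : IsOrthProj P) : reweight v P t P = t := by
  simp [reweight, (isOrthProj_iff_isStarProjection.1 hP).isIdempotentElem.one_sub_ne_self.symm]

lemma reweight_apply_one_sub : reweight v P t (1 - P) = 1 - t := by
  simp [reweight]

lemma reweight_apply_of_ne {Q : Op} (h1 : Q ≠ P) (h2 : Q ≠ 1 - P) : reweight v P t Q = v Q := by
  simp [reweight, h1, h2]

lemma IsGPM2.reweight (hv : IsGPM2 v) (hP : IsOrthProj P) (hP0 : P ≠ 0) (hP1 : P ≠ 1)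
    (ht : t ∈ Set.Icc 0 1) : IsGPM2 (reweight v P t) := by
  refine isGPM2_of_add_one_sub (fun Q hQ => ?_) ?_ (fun Q hQ => ?_)
  · obtain rfl | rfl | ⟨h1, h2⟩ : Q = P ∨ Q = 1 - P ∨ (Q ≠ P ∧ Q ≠ 1 - P) := by tauto
    · rw [reweight_apply_self hP]; exact ht
    · rw [reweight_apply_one_sub]; exact ⟨by linarith [ht.2], by linarith [ht.1]⟩
    · rw [reweight_apply_of_ne h1 h2]; exact hv.1 Q hQ
  · have h1 : (1 : Op) ≠ 1 - P := by rwa [ne_eq, eq_sub_iff_add_eq, add_eq_left]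
    rw [reweight_apply_of_ne (Ne.symm hP1) h1, hv.2.1]
  · obtain rfl | rfl | ⟨h1, h2⟩ : Q = P ∨ Q = 1 - P ∨ (Q ≠ P ∧ Q ≠ 1 - P) := by tauto
    · rw [reweight_apply_self hP, reweight_apply_one_sub]; ring
    · rw [sub_sub_cancel, reweight_apply_self hP, reweight_apply_one_sub]; ring
    · rw [reweight_apply_of_ne h1 h2, reweight_apply_of_ne (by rintro rfl; simp at h2)
        (by simpa using h1), hv.add_one_sub hQ]

lemma reweight_eq_one_iff (hv : IsGPM2 v) (hP : IsOrthProj P) (hvP : v P ∈ Set.Ioo 0 1)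
    (ht : t ∈ Set.Ioo 0 1) (Q : Op) : reweight v P t Q = 1 ↔ v Q = 1 := by
  have hvP' : v (1 - P) = 1 - v P := by linarith [hv.add_one_sub hP]
  obtain rfl | rfl | ⟨h1, h2⟩ : Q = P ∨ Q = 1 - P ∨ (Q ≠ P ∧ Q ≠ 1 - P) := by tauto
  · rw [reweight_apply_self hP]; exact iff_of_false ht.2.ne hvP.2.ne
  · rw [reweight_apply_one_sub, hvP']
    exact iff_of_false (by linarith [ht.1]) (by linarith [hvP.1])
  · rw [reweight_apply_of_ne h1 h2]

end reweight

end QT2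

open QT2 in
/-- There are no propensity functions on `P(ℂ²)`: every Gisin measure `v` on
`P(ℂ²)` admits a different Gisin measure `w` with the same actual set. -/
theorem stmt_16 :
    ∀ v : Op → ℝ, IsGisin v →
      ∃ w : Op → ℝ, IsGisin w ∧ (∃ P, IsOrthProj P ∧ w P ≠ v P) ∧
        {P | IsOrthProj P ∧ w P = 1} = {P | IsOrthProj P ∧ v P = 1} := by
  intro v hv
  obtain ⟨P, hP, hvP⟩ := hv.exists_mem_Ioo
  have hP0 : P ≠ 0 := by rintro rfl; simp [hv.1.map_zero] at hvP
  have hP1 : P ≠ 1 := by rintro rfl; simp [hv.1.2.1] at hvP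
  have ht : v P / 2 ∈ Set.Ioo 0 1 := ⟨by linarith [hvP.1], by linarith [hvP.2]⟩
  have hsame := reweight_eq_one_iff hv.1 hP hvP ht
  refine ⟨reweight v P (v P / 2),
    hv.of_eq_one_iff (hv.1.reweight hP hP0 hP1 (Set.Ioo_subset_Icc_self ht)) hsame,
    ⟨P, hP, ?_⟩, ?_⟩
  · rw [reweight_apply_self hP]; linarith [hvP.1]
  · ext Q
    exact and_congr_right fun _ => hsame Q
end

section
/- The aNU bit violates intermediate determinism in the strongest sense: with S_B = {(x, 1) ∈ ℝ² : −1 ≤ x ≤ 1} and 𝓔_{aB} = {e ∈ ℝ² : ‖e − (1/2, 1/2)‖ ≤ 1/√2 and ‖e − (−1/2, 1/2)‖ ≤ 1/√2} (the intersection of the two closed discs of radius 1/√2 centred at (±1/2, 1/2)), for every ω ∈ S_B the actual set A^{𝓔_{aB}}_ω = {e ∈ 𝓔_{aB} : e·ω = 1} equals the singleton {(0,1)}. In particular, no two distinct states of S_B are distinguished by their actual sets. -/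
open scoped RealInnerProductSpace

namespace ANU

/-- A point of the Euclidean plane `ℝ²`. -/
def pt (a b : ℝ) : EuclideanSpace ℝ (Fin 2) := !₂[a, b]

/-- The bit state space `S_B = {(x, 1) : −1 ≤ x ≤ 1}`. -/
def SB : Set (EuclideanSpace ℝ (Fin 2)) := {ω | -1 ≤ ω 0 ∧ ω 0 ≤ 1 ∧ ω 1 = 1}

/-- The aNU bit effect space: the intersection of the two closed Euclidean discs of radius
`1/√2` centred at `(±1/2, 1/2)`. -/
def EaB : Set (EuclideanSpace ℝ (Fin 2)) :=
  {e | ‖e - pt (1 / 2) (1 / 2)‖ ≤ 1 / Real.sqrt 2 ∧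
       ‖e - pt (-(1 / 2)) (1 / 2)‖ ≤ 1 / Real.sqrt 2}

/-- The actual set of a state `ω` in the aNU bit effect space. -/
def actualSet (ω : EuclideanSpace ℝ (Fin 2)) : Set (EuclideanSpace ℝ (Fin 2)) :=
  {e ∈ EaB | ⟪e, ω⟫ = 1}

end ANU

/-! The unit effect `u = (0,1)` lies on the boundary of both discs, and `u - c` (for a centre `c`)
is an outer normal there, so every point `e` of the disc satisfies
`2 ⟪e - u, u - c⟫ ≤ -‖e - u‖²`. A state `ω ∈ S_B` is a nonnegative combination of the two
outer normals, and `⟪e - u, ω⟫ = 0` for `e` in its actual set; adding the two inequalities forces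
`e = u`. -/

section Supporting

variable {E : Type*} [NormedAddCommGroup E] [InnerProductSpace ℝ E]

theorem two_mul_inner_sub_le_neg_sq_of_norm_sub_le {e p c : E} (h : ‖e - c‖ ≤ ‖p - c‖) :
    2 * ⟪e - p, p - c⟫ ≤ -‖e - p‖ ^ 2 := by
  have hsq : ‖e - c‖ ^ 2 ≤ ‖p - c‖ ^ 2 := pow_le_pow_left₀ (norm_nonneg _) h 2
  have hexp := norm_add_sq_real (e - p) (p - c)
  rw [sub_add_sub_cancel] at hexp
  linarith

theorem eq_of_inner_sub_smul_add_smul_eq_zero {e p c₁ c₂ : E} {a b : ℝ} (ha : 0 ≤ a)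
    (hb : 0 ≤ b) (hab : 0 < a + b) (h₁ : ‖e - c₁‖ ≤ ‖p - c₁‖) (h₂ : ‖e - c₂‖ ≤ ‖p - c₂‖)
    (h : ⟪e - p, a • (p - c₁) + b • (p - c₂)⟫ = 0) : e = p := by
  rw [inner_add_right, real_inner_smul_right, real_inner_smul_right] at h
  have hsq : (a + b) * ‖e - p‖ ^ 2 ≤ 0 := by
    nlinarith [two_mul_inner_sub_le_neg_sq_of_norm_sub_le h₁,
      two_mul_inner_sub_le_neg_sq_of_norm_sub_le h₂]
  have hnorm : ‖e - p‖ ^ 2 = 0 := le_antisymm (by nlinarith) (sq_nonneg _)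
  rwa [sq_eq_zero_iff, norm_eq_zero, sub_eq_zero] at hnorm

end Supporting

namespace ANU

theorem norm_pt_sub_pt (a b c d : ℝ) :
    ‖pt a b - pt c d‖ = Real.sqrt ((a - c) ^ 2 + (b - d) ^ 2) := by
  simp [EuclideanSpace.norm_eq, Fin.sum_univ_two, pt]

theorem norm_pt_zero_one_sub_pt_half (s : ℝ) (hs : s ^ 2 = 1 / 4) :
    ‖pt 0 1 - pt s (1 / 2)‖ = 1 / Real.sqrt 2 := by
  rw [norm_pt_sub_pt, zero_sub, neg_sq, hs, one_div (Real.sqrt 2), ← Real.sqrt_inv]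
  norm_num

theorem pt_zero_one_mem_EaB : pt 0 1 ∈ EaB :=
  ⟨(norm_pt_zero_one_sub_pt_half _ (by norm_num)).le,
    (norm_pt_zero_one_sub_pt_half _ (by norm_num)).le⟩

theorem inner_pt_zero_one_of_mem_SB {ω : EuclideanSpace ℝ (Fin 2)} (hω : ω ∈ SB) :
    ⟪pt 0 1, ω⟫ = 1 := by
  simp [PiLp.inner_apply, Fin.sum_univ_two, pt, hω.2.2]

theorem eq_smul_add_smul_of_mem_SB {ω : EuclideanSpace ℝ (Fin 2)} (hω : ω ∈ SB) :
    ω = (1 - ω 0) • (pt 0 1 - pt (1 / 2) (1 / 2)) +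
      (1 + ω 0) • (pt 0 1 - pt (-(1 / 2)) (1 / 2)) := by
  ext i
  fin_cases i <;> simp [pt, hω.2.2] <;> ring

theorem actualSet_eq_of_mem_SB {ω : EuclideanSpace ℝ (Fin 2)} (hω : ω ∈ SB) :
    actualSet ω = {pt 0 1} := by
  ext e
  constructor
  · rintro ⟨⟨h₁, h₂⟩, he⟩
    refine eq_of_inner_sub_smul_add_smul_eq_zero (sub_nonneg.2 hω.2.1)
      (neg_le_iff_add_nonneg'.1 hω.1) (by linarith)
      (h₁.trans_eq (norm_pt_zero_one_sub_pt_half _ (by norm_num)).symm)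
      (h₂.trans_eq (norm_pt_zero_one_sub_pt_half _ (by norm_num)).symm) ?_
    rw [← eq_smul_add_smul_of_mem_SB hω, inner_sub_left, he, inner_pt_zero_one_of_mem_SB hω,
      sub_self]
  · rintro rfl
    exact ⟨pt_zero_one_mem_EaB, inner_pt_zero_one_of_mem_SB hω⟩

end ANU

open ANU in
/-- In the aNU bit, the actual set of every state `ω ∈ S_B` is the singleton
consisting of the unit effect `u = (0,1)`; in particular, no two distinct states of `S_B` are
distinguished by their actual sets. -/
theorem stmt_18 :
    (∀ ω ∈ SB, actualSet ω = {pt 0 1}) ∧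
    ∀ ω ∈ SB, ∀ ω' ∈ SB, actualSet ω = actualSet ω' :=
  ⟨fun _ hω => actualSet_eq_of_mem_SB hω, fun _ hω _ hω' =>
    (actualSet_eq_of_mem_SB hω).trans (actualSet_eq_of_mem_SB hω').symm⟩
end
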